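/- arXiv:1312.0158 — 2 statements merged into one kernel-verified Lean document; each statement's English description precedes it below -/
import Mathlib

section
/- Let U, V ∈ ℝ^{M×N} with columns uₙ, vₙ, and let Φ = U + iV be the frame with vectors φₙ = uₙ + i vₙ ∈ ℂ^M. Then the intensity measurement map 𝒜_Φ is injective on ℂ^M/S¹ if and only if there is NO pair (X, Y) ≠ (0, 0), with X ∈ ℝ^{M×M} symmetric and Y ∈ ℝ^{M×M} skew-symmetric, such that rank(X + iY) ≤ 2 and uₙᵀ X uₙ + vₙᵀ X vₙ − 2 uₙᵀ Y vₙ = 0 for every 1 ≤ n ≤ N. -/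
open Matrix Complex MvPolynomial Finset

/-- The intensity measurements of `x` with respect to the frame `Φ`:
the `n`-th measurement is `|⟨x, φₙ⟩|²` where `⟨x, y⟩ = ∑ m, x m * conj (y m)`. -/
noncomputable def intensity {M N : ℕ} (Φ : Fin N → Fin M → ℂ) (x : Fin M → ℂ) : Fin N → ℝ :=
  fun n => ‖∑ m, x m * (starRingEnd ℂ) (Φ n m)‖ ^ 2

/-- `𝒜_Φ` is injective on `ℂ^M / S¹`. -/
noncomputable def PhaseInjective {M N : ℕ} (Φ : Fin N → Fin M → ℂ) : Prop :=
  ∀ x y : Fin M → ℂ, intensity Φ x = intensity Φ y →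
    ∃ θ : ℝ, x = fun m => Complex.exp (θ * Complex.I) * y m

/-- The frame `Φ = U + iV` with vectors `φₙ = uₙ + i vₙ`, where `uₙ, vₙ` are the
`n`-th columns of `U` and `V`. -/
noncomputable def frameOf {M N : ℕ} (U V : Matrix (Fin M) (Fin N) ℝ) : Fin N → Fin M → ℂ :=
  fun n m => (U m n : ℂ) + (V m n : ℂ) * Complex.I

/-!
Writing `Q = X + iY`, the real pairs `(X, Y)` with `X` symmetric and `Y` skew-symmetric are exactly
the Hermitian matrices, and for `φ = u + iv` one has `φ* Q φ = uᵀXu + vᵀXv - 2uᵀYv`. Since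
`|⟨x, φ⟩|² = φ* (x x*) φ`, equal intensities of `x` and `y` put the Hermitian matrix `x x* - y y*`,
of rank at most two, in the kernel of `Q ↦ (φₙ* Q φₙ)ₙ`; and `x x* = y y*` forces `x ∈ S¹ y`.
Conversely, for a nonzero Hermitian `Q = ∑ λᵢ wᵢ wᵢ*` in that kernel with at most two nonzero
eigenvalues, `∑ λᵢ 𝒜(wᵢ) = 0`. If there are eigenvalues `λ_p > 0 > λ_q`, then `√λ_p w_p` and
`√(-λ_q) w_q` are orthogonal nonzero vectors with the same intensities; otherwise all nonzero
eigenvalues share a sign and `𝒜(w_j) = 0 = 𝒜(0)` for every `λ_j ≠ 0`.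
-/

open ComplexConjugate ComplexOrder

lemma eq_zero_of_card_ne_zero_le_two {ι R : Type*} [Fintype ι] [Zero R] [DecidableEq R] {c : ι → R}
    (hc : Fintype.card {i // c i ≠ 0} ≤ 2) {p q i : ι} (hpq : p ≠ q) (hp : c p ≠ 0)
    (hq : c q ≠ 0) (hip : i ≠ p) (hiq : i ≠ q) : c i = 0 := by
  by_contra hi
  have := (Fintype.two_lt_card_iff (α := {i // c i ≠ 0})).mpr ⟨⟨i, hi⟩, ⟨p, hp⟩, ⟨q, hq⟩,
    by simpa using hip, by simpa using hiq, by simpa using hpq⟩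
  omega

lemma Matrix.IsHermitian.sum_eigenvalues_smul_vecMulVec {𝕜 n : Type*} [RCLike 𝕜] [Fintype n]
    [DecidableEq n] {A : Matrix n n 𝕜} (hA : A.IsHermitian) :
    ∑ i, (hA.eigenvalues i : 𝕜) • vecMulVec ⇑(hA.eigenvectorBasis i) (star ⇑(hA.eigenvectorBasis i))
      = A := by
  conv_rhs => rw [hA.spectral_theorem]
  ext a b
  rw [Unitary.conjStarAlgAut_apply, mul_apply, Matrix.sum_apply]
  refine Finset.sum_congr rfl fun i _ => ?_
  simp only [mul_diagonal, vecMulVec_apply, Matrix.smul_apply, smul_eq_mul, star_apply,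
    Pi.star_apply, eigenvectorUnitary_apply, Function.comp_apply]
  ring

section RealPair

variable {ι : Type*}

def complexify (X Y : Matrix ι ι ℝ) : Matrix ι ι ℂ :=
  X.map (fun r => (r : ℂ)) + I • Y.map (fun r => (r : ℂ))

@[simp]
lemma complexify_apply (X Y : Matrix ι ι ℝ) (i j : ι) :
    complexify X Y i j = ⟨X i j, Y i j⟩ := by
  apply Complex.ext <;> simp [complexify]

lemma complexify_eq_zero_iff {X Y : Matrix ι ι ℝ} : complexify X Y = 0 ↔ X = 0 ∧ Y = 0 := by
  simp only [← Matrix.ext_iff, complexify_apply, Matrix.zero_apply, Complex.ext_iff,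
    Complex.zero_re, Complex.zero_im, forall_and]

lemma isHermitian_complexify {X Y : Matrix ι ι ℝ} (hX : X.IsSymm) (hY : Yᵀ = -Y) :
    (complexify X Y).IsHermitian := by
  ext i j
  have hXij : X j i = X i j := by rw [← hX.apply]
  have hYij : Y j i = -Y i j := by rw [← Matrix.transpose_apply Y, hY, Matrix.neg_apply]
  simp [Complex.ext_iff, hXij, hYij]

lemma complexify_re_im (Q : Matrix ι ι ℂ) : complexify (Q.map re) (Q.map im) = Q := by
  ext i j
  simp

lemma Matrix.IsHermitian.isSymm_map_re {Q : Matrix ι ι ℂ} (hQ : Q.IsHermitian) :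
    (Q.map re).IsSymm := by
  ext i j
  simp [← hQ.apply i j]

lemma Matrix.IsHermitian.transpose_map_im {Q : Matrix ι ι ℂ} (hQ : Q.IsHermitian) :
    (Q.map im)ᵀ = -Q.map im := by
  ext i j
  simp [← hQ.apply i j]

lemma star_dotProduct_complexify_mulVec [Fintype ι] {X Y : Matrix ι ι ℝ} (hX : X.IsSymm)
    (hY : Yᵀ = -Y) (u v : ι → ℝ) :
    star (fun m => (u m : ℂ) + v m * I) ⬝ᵥ complexify X Y *ᵥ (fun m => (u m : ℂ) + v m * I)
      = ↑(u ⬝ᵥ X *ᵥ u + v ⬝ᵥ X *ᵥ v - 2 * (u ⬝ᵥ Y *ᵥ v)) := by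
  have hskew : v ⬝ᵥ Y *ᵥ u = -(u ⬝ᵥ Y *ᵥ v) := by
    rw [dotProduct_mulVec, ← mulVec_transpose, hY, neg_mulVec, neg_dotProduct, dotProduct_comm]
  apply Complex.ext
  · rw [Complex.ofReal_re, two_mul, sub_add_eq_sub_sub, sub_eq_add_neg _ (u ⬝ᵥ Y *ᵥ v), ← hskew]
    simp only [dotProduct, mulVec, Complex.re_sum, Finset.mul_sum, ← Finset.sum_add_distrib,
      ← Finset.sum_sub_distrib]
    refine Finset.sum_congr rfl fun i _ => Finset.sum_congr rfl fun j _ => ?_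
    simp only [Pi.star_apply, star_add, RCLike.star_def, conj_ofReal, star_mul', conj_I,
      complexify_apply, mul_re, add_re, mul_im, add_im, neg_re, neg_im, ofReal_re, ofReal_im,
      I_re, I_im]
    ring
  · rw [Complex.ofReal_im]
    exact (isHermitian_complexify hX hY).im_star_dotProduct_mulVec_self _

end RealPair

section RankOne

variable {ι : Type*} [Fintype ι]

lemma star_dotProduct_vecMulVec_mulVec (x φ : ι → ℂ) :
    star φ ⬝ᵥ vecMulVec x (star x) *ᵥ φ = ((‖x ⬝ᵥ star φ‖ ^ 2 : ℝ) : ℂ) := by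
  have hconj : star x ⬝ᵥ φ = star (x ⬝ᵥ star φ) := by
    rw [dotProduct_comm x, ← star_dotProduct_star, star_star]
  rw [vecMulVec_mulVec, op_smul_eq_smul, dotProduct_smul, smul_eq_mul, dotProduct_comm (star φ),
    hconj, Complex.sq_norm, Complex.normSq_eq_conj_mul_self]
  rfl

lemma rank_vecMulVec_sub_vecMulVec_le_two (x y : ι → ℂ) :
    (vecMulVec x (star x) - vecMulVec y (star y)).rank ≤ 2 := by
  have hfactor : vecMulVec x (star x) - vecMulVec y (star y)
      = (Matrix.of fun m => ![x m, y m]) * Matrix.of ![star x, -star y] := by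
    ext m k
    simp [Matrix.mul_apply, Fin.sum_univ_two, vecMulVec_apply, sub_eq_add_neg]
  rw [hfactor]
  exact (rank_mul_le_left _ _).trans ((rank_le_card_width _).trans (by simp))

lemma exists_exp_mul_eq_of_vecMulVec_eq {x y : ι → ℂ}
    (h : vecMulVec x (star x) = vecMulVec y (star y)) :
    ∃ θ : ℝ, x = fun m => exp (θ * I) * y m := by
  have hentry : ∀ m k, x m * conj (x k) = y m * conj (y k) := fun m k => by
    simpa [vecMulVec_apply] using congrFun (congrFun h m) k
  have hnorm : ∀ m, ‖x m‖ = ‖y m‖ := fun m => by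
    have hsq := congrArg re (hentry m m)
    simp only [mul_conj, ofReal_re, ← Complex.sq_norm] at hsq
    exact (sq_eq_sq₀ (norm_nonneg _) (norm_nonneg _)).mp hsq
  by_cases hy : y = 0
  · refine ⟨0, funext fun m => ?_⟩
    simpa [hy] using hnorm m
  obtain ⟨k, hk⟩ := Function.ne_iff.mp hy
  have hxk : x k ≠ 0 := norm_ne_zero_iff.mp (by simpa [hnorm k] using hk)
  obtain ⟨θ, hθ⟩ := (norm_eq_one_iff (conj (y k) / conj (x k))).mp (by
    rw [norm_div, norm_conj, norm_conj, hnorm k, div_self (by simpa using hk)])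
  refine ⟨θ, funext fun m => ?_⟩
  rw [hθ, div_mul_eq_mul_div, eq_div_iff (by simpa using hxk), hentry, mul_comm]

end RankOne

section Intensity

variable {M N : ℕ}

lemma ofReal_intensity (Φ : Fin N → Fin M → ℂ) (x : Fin M → ℂ) (n : Fin N) :
    (intensity Φ x n : ℂ) = star (Φ n) ⬝ᵥ vecMulVec x (star x) *ᵥ Φ n :=
  (star_dotProduct_vecMulVec_mulVec x (Φ n)).symm

lemma intensity_zero (Φ : Fin N → Fin M → ℂ) : intensity Φ 0 = 0 := by
  ext n
  simp [intensity]

lemma intensity_nonneg (Φ : Fin N → Fin M → ℂ) (x : Fin M → ℂ) (n : Fin N) :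
    0 ≤ intensity Φ x n := by
  unfold intensity
  positivity

lemma intensity_smul (Φ : Fin N → Fin M → ℂ) (c : ℂ) (x : Fin M → ℂ) :
    intensity Φ (c • x) = ‖c‖ ^ 2 • intensity Φ x := by
  ext n
  simp only [intensity, Pi.smul_apply, smul_eq_mul, mul_assoc, ← Finset.mul_sum, norm_mul, mul_pow]

lemma Matrix.IsHermitian.star_dotProduct_mulVec_eq_sum_intensity {Q : Matrix (Fin M) (Fin M) ℂ}
    (hQ : Q.IsHermitian) (Φ : Fin N → Fin M → ℂ) (n : Fin N) :
    star (Φ n) ⬝ᵥ Q *ᵥ Φ n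
      = ↑(∑ i, hQ.eigenvalues i * intensity Φ ⇑(hQ.eigenvectorBasis i) n) := by
  conv_lhs => rw [← hQ.sum_eigenvalues_smul_vecMulVec]
  simp only [sum_mulVec, smul_mulVec, dotProduct_sum, dotProduct_smul, smul_eq_mul,
    ← ofReal_intensity]
  push_cast
  rfl

lemma PhaseInjective.eq_zero_of_dotProduct_star_eq_zero {Φ : Fin N → Fin M → ℂ}
    (hΦ : PhaseInjective Φ) {x y : Fin M → ℂ} (hxy : x ⬝ᵥ star y = 0)
    (h : intensity Φ x = intensity Φ y) : x = 0 := by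
  obtain ⟨θ, hθ⟩ := hΦ x y h
  have hx : x = exp (θ * I) • y := hθ
  rw [← dotProduct_self_star_eq_zero]
  conv_lhs => rw [hx]
  rw [star_smul, dotProduct_smul, ← hx, hxy, smul_zero]

lemma PhaseInjective.eq_zero_of_intensity_eq_zero {Φ : Fin N → Fin M → ℂ}
    (hΦ : PhaseInjective Φ) {x : Fin M → ℂ} (h : intensity Φ x = 0) : x = 0 :=
  hΦ.eq_zero_of_dotProduct_star_eq_zero (y := 0) (by simp) (by rw [h, intensity_zero])

lemma PhaseInjective.smul_intensity_add_smul_intensity_ne_zero {Φ : Fin N → Fin M → ℂ}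
    (hΦ : PhaseInjective Φ) {x y : Fin M → ℂ} (hx : x ≠ 0) (hxy : x ⬝ᵥ star y = 0)
    {a b : ℝ} (ha : 0 < a) (hb : b < 0) : a • intensity Φ x + b • intensity Φ y ≠ 0 := by
  intro h
  have hscaled := hΦ.eq_zero_of_dotProduct_star_eq_zero
    (x := ((√a : ℝ) : ℂ) • x) (y := ((√(-b) : ℝ) : ℂ) • y)
    (by simp [star_smul, dotProduct_smul, hxy])
    (by rw [intensity_smul, intensity_smul, norm_real, norm_real, Real.norm_eq_abs,
      Real.norm_eq_abs, sq_abs, sq_abs, Real.sq_sqrt ha.le, Real.sq_sqrt (neg_nonneg.mpr hb.le),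
      neg_smul, eq_neg_of_add_eq_zero_left h])
  exact hx ((smul_eq_zero.mp hscaled).resolve_left (by exact_mod_cast (Real.sqrt_pos.mpr ha).ne'))

lemma intensity_eq_zero_of_sum_smul_intensity_eq_zero {ι : Type*} [Fintype ι]
    {Φ : Fin N → Fin M → ℂ} {w : ι → Fin M → ℂ} {c : ι → ℝ} {j : ι} (hj : c j ≠ 0)
    (hsign : ∀ i, 0 ≤ c j * c i) (h : ∑ i, c i • intensity Φ (w i) = 0) :
    intensity Φ (w j) = 0 := by
  ext n
  have hsum : ∑ i, c j * c i * intensity Φ (w i) n = 0 := by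
    simp only [mul_assoc, ← Finset.mul_sum]
    exact mul_eq_zero_of_right _ (by simpa using congrFun h n)
  have hterm := (Finset.sum_eq_zero_iff_of_nonneg fun i _ =>
    mul_nonneg (hsign i) (intensity_nonneg Φ _ n)).mp hsum j (Finset.mem_univ j)
  simpa [hj] using hterm

lemma PhaseInjective.eq_zero_of_sum_smul_intensity_eq_zero {ι : Type*} [Fintype ι]
    {Φ : Fin N → Fin M → ℂ} (hΦ : PhaseInjective Φ) {w : ι → EuclideanSpace ℂ (Fin M)}
    (hw : Orthonormal ℂ w) {c : ι → ℝ} (hc : Fintype.card {i // c i ≠ 0} ≤ 2)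
    (h : ∑ i, c i • intensity Φ (w i) = 0) : c = 0 := by
  have hw_ne : ∀ i, ⇑(w i) ≠ 0 := fun i hi => hw.ne_zero i (by ext m; simp [hi])
  by_contra hc0
  obtain ⟨j, hj⟩ : ∃ j, c j ≠ 0 := Function.ne_iff.mp hc0
  by_cases hmix : ∃ p q, 0 < c p ∧ c q < 0
  · obtain ⟨p, q, hp, hq⟩ := hmix
    have hpq : p ≠ q := by rintro rfl; linarith
    rw [Fintype.sum_eq_add p q hpq fun i ⟨hip, hiq⟩ => by
      rw [eq_zero_of_card_ne_zero_le_two hc hpq hp.ne' hq.ne hip hiq, zero_smul]] at h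
    exact hΦ.smul_intensity_add_smul_intensity_ne_zero (hw_ne p) (hw.inner_eq_zero hpq.symm)
      hp hq h
  · push Not at hmix
    have hsign : ∀ i, 0 ≤ c j * c i := fun i => by
      rcases lt_or_gt_of_ne hj with hneg | hpos
      · exact mul_nonneg_of_nonpos_of_nonpos hneg.le
          (not_lt.mp fun hi => (hmix i j hi).not_gt hneg)
      · exact mul_nonneg hpos.le (hmix j i hpos)
    exact hw_ne j (hΦ.eq_zero_of_intensity_eq_zero
      (intensity_eq_zero_of_sum_smul_intensity_eq_zero (w := fun i => ⇑(w i)) hj hsign h))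

theorem phaseInjective_iff_forall_isHermitian_rank_le_two (Φ : Fin N → Fin M → ℂ) :
    PhaseInjective Φ ↔ ∀ Q : Matrix (Fin M) (Fin M) ℂ, Q.IsHermitian → Q.rank ≤ 2 →
      (∀ n, star (Φ n) ⬝ᵥ Q *ᵥ Φ n = 0) → Q = 0 := by
  constructor
  · intro hΦ Q hQ hrank hker
    rw [← hQ.eigenvalues_eq_zero_iff]
    refine hΦ.eq_zero_of_sum_smul_intensity_eq_zero hQ.eigenvectorBasis.orthonormal
      (hQ.rank_eq_card_non_zero_eigs ▸ hrank) ?_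
    ext n
    have hn := hker n
    rw [hQ.star_dotProduct_mulVec_eq_sum_intensity, ofReal_eq_zero] at hn
    simpa using hn
  · intro h x y hxy
    apply exists_exp_mul_eq_of_vecMulVec_eq
    rw [← sub_eq_zero]
    refine h _ ((posSemidef_vecMulVec_self_star x).isHermitian.sub
      (posSemidef_vecMulVec_self_star y).isHermitian) (rank_vecMulVec_sub_vecMulVec_le_two x y)
      fun n => ?_
    rw [sub_mulVec, dotProduct_sub, ← ofReal_intensity, ← ofReal_intensity, hxy, sub_self]

end Intensity

theorem phaseInjective_iff_no_real_pair (M N : ℕ) (U V : Matrix (Fin M) (Fin N) ℝ) :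
    PhaseInjective (frameOf U V) ↔
      ¬ ∃ (X Y : Matrix (Fin M) (Fin M) ℝ), ¬ (X = 0 ∧ Y = 0) ∧ X.IsSymm ∧ Yᵀ = -Y ∧
        (X.map (fun r => (r : ℂ)) + Complex.I • Y.map (fun r => (r : ℂ))).rank ≤ 2 ∧
        ∀ n : Fin N,
          (fun m => U m n) ⬝ᵥ X *ᵥ (fun m => U m n)
            + (fun m => V m n) ⬝ᵥ X *ᵥ (fun m => V m n)
            - 2 * ((fun m => U m n) ⬝ᵥ Y *ᵥ (fun m => V m n)) = 0 := by
  rw [phaseInjective_iff_forall_isHermitian_rank_le_two]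
  constructor
  · rintro h ⟨X, Y, hXY, hX, hY, hrank, hker⟩
    refine hXY (complexify_eq_zero_iff.mp (h _ (isHermitian_complexify hX hY) hrank fun n => ?_))
    exact (star_dotProduct_complexify_mulVec hX hY _ _).trans (by rw [hker n, ofReal_zero])
  · rintro h Q hQ hrank hker
    by_contra hQ0
    have hX := hQ.isSymm_map_re
    have hY := hQ.transpose_map_im
    refine h ⟨Q.map re, Q.map im, ?_, hX, hY, ?_, fun n => ?_⟩
    · rwa [← complexify_eq_zero_iff, complexify_re_im]
    · change (complexify _ _).rank ≤ 2
      rwa [complexify_re_im]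
    · have hn := star_dotProduct_complexify_mulVec hX hY (fun m => U m n) (fun m => V m n)
      rw [complexify_re_im] at hn
      exact_mod_cast hn.symm.trans (hker n)
end

section
/- For an integer M ≥ 2, the integer d_{M,2} = ∏_{i=0}^{M−3} binom(M+i, 2) / binom(2+i, 2) is odd if and only if M = 2^k + 1 for some integer k ≥ 0. -/
open Matrix Complex MvPolynomial Finset

/-!
Write `M = n + 2`. Since `2 * (m + 2).choose 2 = (m + 2) * (m + 1)`, both products telescope into
factorials, and the quotient is `(2n+1)! (2n)! / ((n+1)! n!)² = (2n + 1) * catalan n ^ 2`. So it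
is odd exactly when `catalan n = (2n)! / (n! (n+1)!)` is. Legendre's formula
`v₂(m!) = m - s₂(m)`, with `s₂` the binary digit sum, gives `v₂(catalan n) = s₂(n + 1) - 1`,
which vanishes exactly when `n + 1` is a power of two.
-/

open Nat

namespace Nat

theorem digits_sum_base_mul {b : ℕ} (hb : 1 < b) (m : ℕ) :
    (b.digits (b * m)).sum = (b.digits m).sum := by
  rcases m.eq_zero_or_pos with rfl | hm
  · simp
  · simp [digits_base_mul hb hm]

theorem digits_sum_eq_zero_iff {b m : ℕ} : (b.digits m).sum = 0 ↔ m = 0 := by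
  refine ⟨fun h => ?_, fun h => by simp [h]⟩
  by_contra hm
  exact getLast_digit_ne_zero b hm <|
    List.sum_eq_zero_iff.1 h _ (List.getLast_mem (digits_ne_nil_iff_ne_zero.2 hm))

theorem digits_sum_eq_one_iff {b : ℕ} (hb : 1 < b) {m : ℕ} :
    (b.digits m).sum = 1 ↔ ∃ k, m = b ^ k := by
  constructor
  · induction m using Nat.strong_induction_on with
    | _ m ih =>
      intro hm
      have hm0 : m ≠ 0 := by rintro rfl; simp at hm
      rw [digits_def' hb (pos_of_ne_zero hm0), List.sum_cons] at hm
      obtain h | h : m % b = 0 ∧ (b.digits (m / b)).sum = 1 ∨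
          m % b = 1 ∧ (b.digits (m / b)).sum = 0 := by omega
      · obtain ⟨k, hk⟩ := ih (m / b) (div_lt_self (pos_of_ne_zero hm0) hb) h.2
        exact ⟨k + 1, by rw [← div_add_mod m b, h.1, hk, pow_succ]; ring⟩
      · exact ⟨0, by rw [← div_add_mod m b, h.1, digits_sum_eq_zero_iff.1 h.2]; simp⟩
  · rintro ⟨k, rfl⟩
    simpa [digits_of_lt b 1 one_ne_zero hb] using
      congrArg List.sum (digits_base_pow_mul (k := k) hb one_pos)

end Nat

theorem padicValNat_two_factorial_add_digits_sum (m : ℕ) :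
    padicValNat 2 m ! + (digits 2 m).sum = m := by
  have := sub_one_mul_padicValNat_factorial (p := 2) m
  have := digit_sum_le 2 m
  omega

theorem catalan_mul_factorial_mul_factorial (n : ℕ) :
    catalan n * (n ! * (n + 1)!) = (2 * n)! := by
  have h := choose_mul_factorial_mul_factorial (show n ≤ 2 * n by omega)
  rw [show 2 * n - n = n by omega, ← centralBinom_eq_two_mul_choose,
    ← succ_mul_catalan_eq_centralBinom] at h
  rw [← h, factorial_succ]
  ring

theorem catalan_ne_zero (n : ℕ) : catalan n ≠ 0 :=
  right_ne_zero_of_mul (by rw [succ_mul_catalan_eq_centralBinom]; exact centralBinom_ne_zero n)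

theorem padicValNat_two_catalan_add_one (n : ℕ) :
    padicValNat 2 (catalan n) + 1 = (digits 2 (n + 1)).sum := by
  have hv := congrArg (padicValNat 2) (catalan_mul_factorial_mul_factorial n)
  rw [padicValNat.mul (catalan_ne_zero n) (by positivity),
    padicValNat.mul (by positivity) (by positivity)] at hv
  have h2n := padicValNat_two_factorial_add_digits_sum (2 * n)
  have hn := padicValNat_two_factorial_add_digits_sum n
  have hn1 := padicValNat_two_factorial_add_digits_sum (n + 1)
  rw [digits_sum_base_mul one_lt_two] at h2n
  omega

theorem odd_catalan_iff (n : ℕ) : Odd (catalan n) ↔ ∃ k, n + 1 = 2 ^ k := by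
  rw [← digits_sum_eq_one_iff one_lt_two, ← padicValNat_two_catalan_add_one, Nat.add_eq_right,
    padicValNat.eq_zero_iff]
  simp only [OfNat.ofNat_ne_one, catalan_ne_zero, false_or, Nat.two_dvd_ne_zero, Nat.odd_iff]

namespace Nat

theorem two_mul_choose_two (m : ℕ) : 2 * (m + 2).choose 2 = (m + 2) * (m + 1) := by
  simpa [mul_comm] using (add_one_mul_choose_eq (m + 1) 1).symm

theorem two_pow_mul_factorial_mul_prod_choose_two (a n : ℕ) :
    2 ^ n * ((a + 1)! * a !) * ∏ i ∈ range n, (a + 2 + i).choose 2 = (a + n + 1)! * (a + n)! := by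
  induction n with
  | zero => simp
  | succ n ih =>
    calc 2 ^ (n + 1) * ((a + 1)! * a !) * ∏ i ∈ range (n + 1), (a + 2 + i).choose 2
        = (2 ^ n * ((a + 1)! * a !) * ∏ i ∈ range n, (a + 2 + i).choose 2) *
            (2 * (a + n + 2).choose 2) := by
          rw [prod_range_succ, pow_succ, add_right_comm a 2 n]; ring
      _ = (a + n + 1)! * (a + n)! * ((a + n + 2) * (a + n + 1)) := by
          rw [ih, two_mul_choose_two]
      _ = (a + (n + 1) + 1)! * (a + (n + 1))! := by
          rw [← add_assoc, factorial_succ (a + n + 1), factorial_succ (a + n)]; ring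

theorem prod_choose_two_eq_prod_mul_catalan_sq (n : ℕ) :
    ∏ i ∈ range n, (n + 2 + i).choose 2 =
      (∏ i ∈ range n, (2 + i).choose 2) * ((2 * n + 1) * catalan n ^ 2) := by
  have hB := two_pow_mul_factorial_mul_prod_choose_two 0 n
  have hA := two_pow_mul_factorial_mul_prod_choose_two n n
  simp only [zero_add, factorial_zero, factorial_one, mul_one] at hB
  apply Nat.eq_of_mul_eq_mul_left (show 0 < 2 ^ n * ((n + 1)! * n !) by positivity)
  calc 2 ^ n * ((n + 1)! * n !) * ∏ i ∈ range n, (n + 2 + i).choose 2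
      = (2 * n + 1)! * (2 * n)! := by rw [hA, two_mul]
    _ = (2 * n + 1) * catalan n ^ 2 * ((n + 1)! * n !) ^ 2 := by
        rw [factorial_succ, ← catalan_mul_factorial_mul_factorial]; ring
    _ = 2 ^ n * ((n + 1)! * n !) *
          ((∏ i ∈ range n, (2 + i).choose 2) * ((2 * n + 1) * catalan n ^ 2)) := by
        rw [← hB]; ring

end Nat

theorem degree_rank_two_odd_iff (M : ℕ) (hM : 2 ≤ M) :
    Odd ((∏ i ∈ Finset.range (M - 2), Nat.choose (M + i) 2) /
        (∏ i ∈ Finset.range (M - 2), Nat.choose (2 + i) 2)) ↔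
      ∃ k : ℕ, M = 2 ^ k + 1 := by
  obtain ⟨n, rfl⟩ : ∃ n, M = n + 2 := ⟨M - 2, by omega⟩
  have hB : 0 < ∏ i ∈ range n, (2 + i).choose 2 := prod_pos fun i _ => choose_pos (by omega)
  rw [Nat.add_sub_cancel, prod_choose_two_eq_prod_mul_catalan_sq, Nat.mul_div_cancel_left _ hB, Nat.odd_mul,
    Nat.odd_pow_iff two_ne_zero, and_iff_right (odd_two_mul_add_one n), odd_catalan_iff]
  exact exists_congr fun k => by omega
end
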